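/- For the discrete distribution ν_k assigning mass 1-1/k to the point 0 and mass 2^{-k²}/k to each of the points 1,…,2^{k²}, the minimum over probability distributions p of the expected log-loss E_{ν_k}[-log p(X)] (attained at p = ν_k) tends to infinity as k → ∞, while for t ∈ [0,1) the minimum of the expected t-log-loss E_{ν_k}[-log_t p(X)] remains bounded (tends to a finite limit) as k → ∞. -/

import Mathlib

open Filter

/-- The distribution `ν_k` assigning mass `1 - 1/k` to the point `0` and mass
`2^(-k²)/k` to each of the points `1, …, 2^(k²)`. -/
noncomputable def nuk (k : ℕ) (i : ℕ) : ℝ :=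
  if i = 0 then 1 - 1 / (k : ℝ)
  else if i ≤ 2 ^ (k ^ 2) then ((2 : ℝ) ^ (k ^ 2))⁻¹ / (k : ℝ) else 0

/-!
By Gibbs' inequality the optimal expected log-loss of `ν_k` is at least its Shannon entropy,
and the entropy is at least `k log 2` because `ν_k` spreads mass `1/k` uniformly over `2^(k²)`
points. The `t`-log-loss `-log_t p = (1 - p^(1-t)) / (1 - t)` instead lies in `[0, 1/(1-t)]`
for `p ∈ (0, 1]`, so every expected `t`-log-loss, hence also the optimal one, is at most
`1/(1-t)`.
-/

open Finset Real

section ExpectedLoss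

variable {ι : Type*}

/-- `ℓ` is a logarithm (`log` or `log_t`): the loss of the prediction `p` at `x` is `-ℓ (p x)`. -/
def expectedLossSet (s : Finset ι) (ν : ι → ℝ) (ℓ : ℝ → ℝ) : Set ℝ :=
  {L | ∃ p : ι → ℝ, (∀ i ∈ s, 0 < p i) ∧ ∑ i ∈ s, p i = 1 ∧ L = -∑ i ∈ s, ν i * ℓ (p i)}

lemma expectedLossSet_nonempty {s : Finset ι} (hs : s.Nonempty) (ν : ι → ℝ) (ℓ : ℝ → ℝ) :
    (expectedLossSet s ν ℓ).Nonempty := by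
  have hcard : (0 : ℝ) < #s := by exact_mod_cast hs.card_pos
  exact ⟨_, fun _ => (#s : ℝ)⁻¹, fun _ _ => inv_pos.2 hcard,
    by rw [sum_const, nsmul_eq_mul, mul_inv_cancel₀ hcard.ne'], rfl⟩

lemma negMulLog_add_mul_log_le {w p : ℝ} (hw : 0 ≤ w) (hp : 0 < p) :
    negMulLog w + w * log p ≤ p - w := by
  rcases hw.eq_or_lt with rfl | hw
  · simpa using hp.le
  have hlog := mul_le_mul_of_nonneg_left (log_le_sub_one_of_pos (div_pos hp hw)) hw.le
  rw [log_div hp.ne' hw.ne', mul_sub, mul_sub, mul_div_cancel₀ _ hw.ne', mul_one] at hlog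
  rw [negMulLog]
  linarith

/-- Gibbs' inequality. -/
lemma sum_negMulLog_le_neg_sum_mul_log {s : Finset ι} {ν p : ι → ℝ}
    (hν : ∀ i ∈ s, 0 ≤ ν i) (hp : ∀ i ∈ s, 0 < p i) (hsum : ∑ i ∈ s, p i ≤ ∑ i ∈ s, ν i) :
    ∑ i ∈ s, negMulLog (ν i) ≤ -∑ i ∈ s, ν i * log (p i) := by
  have := sum_le_sum fun i hi => negMulLog_add_mul_log_le (hν i hi) (hp i hi)
  rw [sum_add_distrib, sum_sub_distrib] at this
  linarith

lemma sum_negMulLog_le_of_mem_expectedLossSet {s : Finset ι} {ν : ι → ℝ} {L : ℝ}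
    (hν : ∀ i ∈ s, 0 ≤ ν i) (hν1 : ∑ i ∈ s, ν i = 1) (hL : L ∈ expectedLossSet s ν log) :
    ∑ i ∈ s, negMulLog (ν i) ≤ L := by
  obtain ⟨p, hp, hp1, rfl⟩ := hL
  exact sum_negMulLog_le_neg_sum_mul_log hν hp (hp1.trans hν1.symm).le

lemma csInf_expectedLossSet_le {s : Finset ι} (hs : s.Nonempty) {ν : ι → ℝ} {ℓ : ℝ → ℝ} {c : ℝ}
    (hν : ∀ i ∈ s, 0 ≤ ν i) (hℓ_nonpos : ∀ x ∈ Set.Ioc (0 : ℝ) 1, ℓ x ≤ 0)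
    (hℓ_ge : ∀ x, 0 < x → -c ≤ ℓ x) :
    sInf (expectedLossSet s ν ℓ) ≤ c * ∑ i ∈ s, ν i := by
  have hbdd : BddBelow (expectedLossSet s ν ℓ) := by
    refine ⟨0, ?_⟩
    rintro _ ⟨p, hp, hp1, rfl⟩
    have hp_le : ∀ i ∈ s, p i ≤ 1 := fun i hi =>
      hp1 ▸ single_le_sum (fun j hj => (hp j hj).le) hi
    rw [neg_nonneg]
    exact sum_nonpos fun i hi =>
      mul_nonpos_of_nonneg_of_nonpos (hν i hi) (hℓ_nonpos _ ⟨hp i hi, hp_le i hi⟩)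
  obtain ⟨L, hL⟩ := expectedLossSet_nonempty hs ν ℓ
  refine csInf_le_of_le hbdd hL ?_
  obtain ⟨p, hp, -, rfl⟩ := hL
  rw [neg_le, ← neg_mul, mul_sum]
  exact sum_le_sum fun i hi => by
    rw [mul_comm]; exact mul_le_mul_of_nonneg_left (hℓ_ge _ (hp i hi)) (hν i hi)

end ExpectedLoss

noncomputable def tLog (t x : ℝ) : ℝ := (x ^ (1 - t) - 1) / (1 - t)

lemma tLog_nonpos {t x : ℝ} (ht : t < 1) (hx : x ∈ Set.Ioc (0 : ℝ) 1) : tLog t x ≤ 0 :=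
  div_nonpos_of_nonpos_of_nonneg (sub_nonpos.2 (rpow_le_one hx.1.le hx.2 (by linarith)))
    (by linarith)

lemma neg_inv_le_tLog {t x : ℝ} (ht : t < 1) (hx : 0 < x) : -(1 - t)⁻¹ ≤ tLog t x := by
  rw [tLog, le_div_iff₀ (by linarith), neg_mul, inv_mul_cancel₀ (by linarith)]
  linarith [rpow_nonneg hx.le (1 - t)]

lemma nuk_nonneg (k i : ℕ) : 0 ≤ nuk k i := by
  unfold nuk
  split_ifs
  · rcases k.eq_zero_or_pos with rfl | hk
    · simp
    · rw [sub_nonneg, div_le_one (by positivity)]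
      exact_mod_cast hk
  · positivity
  · rfl

lemma sum_range_comp_nuk (k : ℕ) (f : ℝ → ℝ) :
    ∑ i ∈ range (2 ^ (k ^ 2) + 1), f (nuk k i)
      = f (1 - 1 / k) + 2 ^ (k ^ 2) * f ((2 ^ (k ^ 2))⁻¹ / k) := by
  rw [sum_range_succ', add_comm, sum_congr rfl fun i hi => by
    rw [nuk, if_neg i.succ_ne_zero, if_pos (mem_range.1 hi).nat_succ_le]]
  simp [nuk]

lemma sum_nuk (k : ℕ) : ∑ i ∈ range (2 ^ (k ^ 2) + 1), nuk k i = 1 := by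
  refine (sum_range_comp_nuk k id).trans ?_
  rw [id, id, ← mul_div_assoc, mul_inv_cancel₀ (by positivity)]
  ring

lemma sum_negMulLog_nuk (k : ℕ) :
    ∑ i ∈ range (2 ^ (k ^ 2) + 1), negMulLog (nuk k i)
      = negMulLog (1 - 1 / k) + (k ^ 2 * log 2 + log k) / k := by
  have h2 : (2 : ℝ) ^ (k ^ 2) ≠ 0 := by positivity
  rw [sum_range_comp_nuk, div_eq_mul_inv ((2 : ℝ) ^ (k ^ 2))⁻¹, negMulLog_mul]
  simp only [negMulLog, log_inv, log_pow]
  field_simp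
  push_cast
  ring

lemma mul_log_two_le_sum_negMulLog_nuk {k : ℕ} (hk : 1 ≤ k) :
    k * log 2 ≤ ∑ i ∈ range (2 ^ (k ^ 2) + 1), negMulLog (nuk k i) := by
  have hk' : (1 : ℝ) ≤ k := by exact_mod_cast hk
  have h0 : 0 ≤ negMulLog (1 - 1 / k) :=
    negMulLog_nonneg (nuk_nonneg k 0) (sub_le_self _ (by positivity))
  have hlog : 0 ≤ log k / k := div_nonneg (log_nonneg hk') (by positivity)
  rw [sum_negMulLog_nuk, add_div, pow_two, mul_assoc, mul_div_cancel_left₀ _ (by positivity)]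
  linarith

/-- The minimum over (positive) probability distributions `p` on the support of
`ν_k` of the expected log-loss `E_{ν_k}[-log p(X)]` tends to infinity as
`k → ∞`, whereas for every `t ∈ [0,1)` the minimum of the expected t-log-loss
`E_{ν_k}[-log_t p(X)]` remains bounded as `k → ∞`. -/
theorem log_loss_unbounded_tlog_loss_bounded :
    Tendsto
      (fun k : ℕ => sInf {L : ℝ | ∃ p : ℕ → ℝ,
        (∀ i ∈ Finset.range (2 ^ (k ^ 2) + 1), 0 < p i) ∧
        (∑ i ∈ Finset.range (2 ^ (k ^ 2) + 1), p i) = 1 ∧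
        L = -∑ i ∈ Finset.range (2 ^ (k ^ 2) + 1), nuk k i * Real.log (p i)})
      atTop atTop
    ∧ ∀ t : ℝ, t ∈ Set.Ico (0:ℝ) 1 → ∃ B : ℝ, ∀ k : ℕ,
        sInf {L : ℝ | ∃ p : ℕ → ℝ,
          (∀ i ∈ Finset.range (2 ^ (k ^ 2) + 1), 0 < p i) ∧
          (∑ i ∈ Finset.range (2 ^ (k ^ 2) + 1), p i) = 1 ∧
          L = -∑ i ∈ Finset.range (2 ^ (k ^ 2) + 1),
                nuk k i * (((p i) ^ (1 - t) - 1) / (1 - t))}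
        ≤ B := by
  have hν (k : ℕ) : ∀ i ∈ range (2 ^ (k ^ 2) + 1), 0 ≤ nuk k i := fun i _ => nuk_nonneg k i
  refine ⟨?_, fun t ht => ⟨(1 - t)⁻¹, fun k => ?_⟩⟩
  · refine tendsto_atTop_mono' _ ?_
      (tendsto_natCast_atTop_atTop.atTop_mul_const (log_pos one_lt_two))
    filter_upwards [eventually_ge_atTop 1] with k hk
    exact (mul_log_two_le_sum_negMulLog_nuk hk).trans <|
      le_csInf (expectedLossSet_nonempty nonempty_range_add_one _ _) fun L hL =>
        sum_negMulLog_le_of_mem_expectedLossSet (hν k) (sum_nuk k) hL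
  · refine (csInf_expectedLossSet_le (ℓ := tLog t) nonempty_range_add_one (hν k)
      (fun x hx => tLog_nonpos ht.2 hx) (fun x hx => neg_inv_le_tLog ht.2 hx)).trans_eq ?_
    rw [sum_nuk, mul_one]
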